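/- Let A = c·J_n + d·I_n where J_n is the all-ones n×n matrix. Then |A| = c'·J_n + d'·I_n with c' = (|cn + d| − |d|)/n and d' = |d|. -/

import Mathlib

/-!
Write `J = n • P` with `P = n⁻¹ • J` the orthogonal projection onto the constant vectors. Then
`c • J + d • 1 = (c n + d) • P + d • (1 - P)`, and in the two-dimensional commutative algebra
spanned by the complementary projections `P` and `1 - P` the absolute value acts coefficientwise:
`|a • P + b • (1 - P)| = |a| • P + |b| • (1 - P)`, since the right side is nonnegative and squares
to the square of `a • P + b • (1 - P)`.
-/

open Matrix

noncomputable def matAbs {n : Type*} [Fintype n] [DecidableEq n] (A : Matrix n n ℝ) :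
    Matrix n n ℝ :=
  (Matrix.posSemidef_conjTranspose_mul_self A).1.eigenvectorUnitary.1 *
    diagonal ((↑) ∘ (√·) ∘ (Matrix.posSemidef_conjTranspose_mul_self A).1.eigenvalues) *
    (star (Matrix.posSemidef_conjTranspose_mul_self A).1.eigenvectorUnitary : Matrix n n ℝ)

/-- The all-ones matrix `J = 1ₙ 1ₙᵀ`. -/
def allOnes (n : ℕ) : Matrix (Fin n) (Fin n) ℝ := Matrix.of fun _ _ => (1 : ℝ)

lemma IsIdempotentElem.smul_add_smul_one_sub_mul {R A : Type*} [CommRing R] [Ring A]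
    [Algebra R A] {p : A} (hp : IsIdempotentElem p) (a b a' b' : R) :
    (a • p + b • (1 - p)) * (a' • p + b' • (1 - p)) = (a * a') • p + (b * b') • (1 - p) := by
  simp only [add_mul, mul_add, smul_mul_smul, hp.eq, hp.one_sub.eq, hp.mul_one_sub_self,
    hp.one_sub_mul_self, smul_zero, add_zero, zero_add]

section Abs

variable {A : Type*} [Ring A] [StarRing A] [TopologicalSpace A] [Algebra ℝ A] [StarModule ℝ A]
  [ContinuousFunctionalCalculus ℝ A IsSelfAdjoint] [PartialOrder A] [StarOrderedRing A]
  [NonnegSpectrumClass ℝ A] [IsTopologicalRing A] [T2Space A]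

lemma IsStarProjection.cfcAbs_smul_add_smul_one_sub {p : A} (hp : IsStarProjection p)
    (a b : ℝ) : CFC.abs (a • p + b • (1 - p)) = |a| • p + |b| • (1 - p) := by
  have hmul := hp.isIdempotentElem.smul_add_smul_one_sub_mul (R := ℝ)
  have hstar (x y : ℝ) : star (x • p + y • (1 - p)) = x • p + y • (1 - p) := by
    simp only [star_add, star_smul, star_trivial, star_sub, star_one, hp.isSelfAdjoint.star_eq]
  -- `|a| • p + |b| • (1 - p)` is the square of the self-adjoint `√|a| • p + √|b| • (1 - p)`.
  have hnonneg : 0 ≤ |a| • p + |b| • (1 - p) := by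
    simpa only [hstar, hmul, Real.mul_self_sqrt (abs_nonneg _)] using
      star_mul_self_nonneg (√|a| • p + √|b| • (1 - p))
  refine CFC.sqrt_unique ?_ hnonneg
  rw [hstar, hmul, hmul, abs_mul_abs_self, abs_mul_abs_self]

end Abs

section MatrixAbs

open scoped MatrixOrder

variable {n : Type*} [Fintype n] [DecidableEq n]

lemma matAbs_eq_cfcAbs (A : Matrix n n ℝ) : matAbs A = CFC.abs A := by
  have hA := posSemidef_conjTranspose_mul_self A
  rw [matAbs, CFC.abs, CFC.sqrt_eq_cfc, cfc_nnreal_eq_real _ _, star_eq_conjTranspose A,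
    hA.1.cfc_eq]
  simp [IsHermitian.cfc, Function.comp_def]
  congr 3 with i
  exact congrArg _ (max_eq_left (hA.eigenvalues_nonneg i)).symm

lemma IsStarProjection.matAbs_smul_add_smul_one_sub {P : Matrix n n ℝ} (hP : IsStarProjection P)
    (a b : ℝ) : matAbs (a • P + b • (1 - P)) = |a| • P + |b| • (1 - P) := by
  rw [matAbs_eq_cfcAbs, hP.cfcAbs_smul_add_smul_one_sub]

end MatrixAbs

lemma allOnes_mul_allOnes (n : ℕ) : allOnes n * allOnes n = (n : ℝ) • allOnes n := by
  ext i j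
  simp [allOnes, Matrix.mul_apply]

lemma isStarProjection_inv_smul_allOnes {n : ℕ} (hn : n ≠ 0) :
    IsStarProjection ((n : ℝ)⁻¹ • allOnes n) where
  isIdempotentElem := by
    rw [IsIdempotentElem, smul_mul_smul, allOnes_mul_allOnes, smul_smul, mul_assoc,
      inv_mul_cancel₀ (Nat.cast_ne_zero.mpr hn), mul_one]
  isSelfAdjoint := by
    refine .smul (by simp) ?_
    ext i j
    simp [allOnes]

theorem matAbs_ones_plus_id (n : ℕ) (hn : 1 ≤ n) (c d : ℝ) :
    matAbs (c • allOnes n + d • (1 : Matrix (Fin n) (Fin n) ℝ)) =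
      ((|c * n + d| - |d|) / n) • allOnes n + |d| • (1 : Matrix (Fin n) (Fin n) ℝ) := by
  have hn0 : (n : ℝ) ≠ 0 := by positivity
  set P := (n : ℝ)⁻¹ • allOnes n
  have hJ : allOnes n = (n : ℝ) • P := by rw [smul_smul, mul_inv_cancel₀ hn0, one_smul]
  have hA : c • allOnes n + d • 1 = (c * n + d) • P + d • (1 - P) := by
    rw [hJ]
    module
  have hB : ((|c * n + d| - |d|) / n) • allOnes n + |d| • 1 = |c * n + d| • P + |d| • (1 - P) := by
    rw [hJ, smul_smul, div_mul_cancel₀ _ hn0]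
    module
  rw [hA, hB, (isStarProjection_inv_smul_allOnes (by omega)).matAbs_smul_add_smul_one_sub]
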